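/- The probability mass function of the sum S of n i.i.d. uniform random variables on {1,...,m} is log-concave and unimodal: Pr(S = t)² ≥ Pr(S = t-1)·Pr(S = t+1) for all t, and Pr(S = t) is nondecreasing for t ≤ n(m+1)/2 and nonincreasing for t ≥ n(m+1)/2. -/

import Mathlib

/-!
Let `a_n(t)` count the tuples in `{1,…,m}ⁿ` with sum `t`. Conditioning on the first coordinate,
`a_{n+1}(t) = ∑_{j<m} a_n(t - 1 - j)` is a sliding window sum of `a_n`. Instead of plain
log-concavity we propagate the Pólya-frequency inequality `a(s-1) a(t+1) ≤ a(s) a(t)` for all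
`s ≤ t`, which survives window sums by a Lagrange-type identity (the window indicator is itself
PF₂) and, unlike log-concavity, needs no "no internal zeros" side condition. Log-concavity is its
case `s = t`; together with the symmetry `t ↦ n(m+1) - t` it gives `a(t-1)² ≤ a(t)²` below the
centre, hence unimodality.
-/

open Finset

/-- The adjacent-index form of the Pólya frequency condition of order 2, i.e. total positivity
of order 2 of the kernel `(i, j) ↦ a (i - j)`. -/
def IsPF2 (a : ℤ → ℝ) : Prop :=
  ∀ s t : ℤ, s ≤ t → a (s - 1) * a (t + 1) ≤ a s * a t

theorem IsPF2.mul_le_mul_of_add_eq {a : ℤ → ℝ} (ha : IsPF2 a) {x y x' y' : ℤ} (hxy : x ≤ y)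
    (hx : x' ≤ x) (hsum : x' + y' = x + y) : a x' * a y' ≤ a x * a y := by
  obtain ⟨d, hd, rfl, rfl⟩ : ∃ d, 0 ≤ d ∧ x' = x - d ∧ y' = y + d :=
    ⟨x - x', by omega, by omega, by omega⟩
  induction d, hd using Int.leInduction with
  | base => simp
  | succ d hd ih =>
    calc a (x - (d + 1)) * a (y + (d + 1)) = a (x - d - 1) * a (y + d + 1) := by ring_nf
      _ ≤ a (x - d) * a (y + d) := ha _ _ (by omega)
      _ ≤ a x * a y := ih (by omega) (by omega)

theorem sum_mul_sum_le_sum_mul_sum_of_minor_nonneg {ι : Type*} [LinearOrder ι] (S : Finset ι)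
    (f g F G : ι → ℝ) (hfg : ∀ k ∈ S, ∀ l ∈ S, k ≤ l → 0 ≤ f k * g l - f l * g k)
    (hFG : ∀ k ∈ S, ∀ l ∈ S, k ≤ l → 0 ≤ F k * G l - F l * G k) :
    (∑ k ∈ S, g k * F k) * (∑ k ∈ S, f k * G k) ≤
      (∑ k ∈ S, f k * F k) * (∑ k ∈ S, g k * G k) := by
  have hminors : ∀ k ∈ S, ∀ l ∈ S, 0 ≤ (f k * g l - f l * g k) * (F k * G l - F l * G k) := by
    intro k hk l hl
    rcases le_total k l with hkl | hlk
    · exact mul_nonneg (hfg k hk l hl hkl) (hFG k hk l hl hkl)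
    · have := mul_nonneg (hfg l hl k hk hlk) (hFG l hl k hk hlk)
      linarith
  have hsum : ∑ k ∈ S, ∑ l ∈ S, (f k * g l - f l * g k) * (F k * G l - F l * G k) =
      2 * ((∑ k ∈ S, f k * F k) * (∑ k ∈ S, g k * G k)
        - (∑ k ∈ S, g k * F k) * (∑ k ∈ S, f k * G k)) := by
    calc _ = ∑ k ∈ S, ∑ l ∈ S, (f k * F k * (g l * G l) + g k * G k * (f l * F l)
          - f k * G k * (g l * F l) - g k * F k * (f l * G l)) :=
          sum_congr rfl fun k _ => sum_congr rfl fun l _ => by ring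
      _ = _ := by simp only [sum_add_distrib, sum_sub_distrib, ← sum_mul_sum]; ring
  linarith [sum_nonneg fun k hk => sum_nonneg fun l hl => hminors k hk l hl]

theorem IsPF2.window_sum {a : ℤ → ℝ} (ha : IsPF2 a) (m : ℕ) :
    IsPF2 (fun t => ∑ j ∈ range m, a (t - (j + 1))) := by
  intro s t hst
  have hf (F : ℕ → ℝ) :
      ∑ j ∈ range (m + 1), (if j < m then 1 else 0) * F j = ∑ j ∈ range m, F j := by
    rw [sum_range_succ, if_neg (lt_irrefl m), zero_mul, add_zero]
    exact sum_congr rfl fun j hj => by rw [if_pos (mem_range.1 hj), one_mul]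
  have hg (F : ℕ → ℝ) :
      ∑ j ∈ range (m + 1), (if 1 ≤ j then 1 else 0) * F j = ∑ j ∈ range m, F (j + 1) := by
    simp [sum_range_succ']
  have key := sum_mul_sum_le_sum_mul_sum_of_minor_nonneg (range (m + 1))
    (fun j => if j < m then 1 else 0) (fun j => if 1 ≤ j then 1 else 0)
    (fun j => a (s - (j + 1))) (fun j => a (t + 1 - (j + 1)))
    (fun k _ l _ hkl => by split_ifs <;> norm_num <;> omega)
    (fun k _ l _ hkl => by
      rcases le_total (s - (k + 1)) (t + 1 - (l + 1)) with h | h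
      · linarith [ha.mul_le_mul_of_add_eq (x' := s - (l + 1)) (y' := t + 1 - (k + 1)) h
          (by omega) (by ring)]
      · linarith [ha.mul_le_mul_of_add_eq (x' := s - (l + 1)) (y' := t + 1 - (k + 1)) h
          (by omega) (by ring)])
  rw [hf, hg, hf, hg] at key
  convert key using 3 <;> push_cast <;> ring_nf

def rankSumCount (n m : ℕ) (t : ℤ) : ℕ :=
  (Finset.univ.filter
    (fun ω : Fin n → Fin m => (∑ i : Fin n, ((ω i : ℕ) + 1 : ℤ)) = t)).card

theorem rankSumCount_zero (m : ℕ) (t : ℤ) : rankSumCount 0 m t = if t = 0 then 1 else 0 := by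
  split_ifs with h <;> simp [rankSumCount, h, eq_comm]

theorem rankSumCount_succ (n m : ℕ) (t : ℤ) :
    rankSumCount (n + 1) m t = ∑ j ∈ range m, rankSumCount n m (t - (j + 1)) := by
  rw [← Fin.sum_univ_eq_sum_range (fun j => rankSumCount n m (t - (j + 1)))]
  simp only [rankSumCount, card_filter]
  rw [← (Fin.consEquiv fun _ => Fin m).sum_comp, Fintype.sum_prod_type]
  refine Fintype.sum_congr _ _ fun j => Fintype.sum_congr _ _ fun σ => ?_
  simp only [Fin.consEquiv_apply, Fin.sum_univ_succ, Fin.cons_zero, Fin.cons_succ]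
  congr 1
  apply propext
  omega

theorem rankSumCount_reflect (n m : ℕ) (t : ℤ) :
    rankSumCount n m (n * (m + 1) - t) = rankSumCount n m t := by
  simp only [rankSumCount, card_filter]
  rw [← (Equiv.piCongrRight fun _ : Fin n => (Fin.revPerm : Equiv.Perm (Fin m))).sum_comp]
  refine Fintype.sum_congr _ _ fun ω => ?_
  have hrev (i : Fin n) : (((ω i).rev : ℕ) + 1 : ℤ) = (m + 1) - ((ω i : ℕ) + 1) := by
    have := (ω i).isLt
    rw [Fin.val_rev]
    omega
  simp only [Equiv.piCongrRight_apply, Pi.map_apply, Fin.revPerm_apply, hrev, sum_sub_distrib,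
    sum_const, card_univ, Fintype.card_fin, nsmul_eq_mul, sub_right_inj]

theorem isPF2_rankSumCount (n m : ℕ) : IsPF2 fun t => (rankSumCount n m t : ℝ) := by
  induction n with
  | zero =>
    intro s t hst
    simp only [rankSumCount_zero]
    split_ifs <;> norm_num <;> omega
  | succ n ih =>
    convert ih.window_sum m using 2 with t
    rw [rankSumCount_succ, Nat.cast_sum]

theorem IsPF2.sub_one_le_of_reflect {a : ℤ → ℝ} (ha : IsPF2 a) (h0 : ∀ t, 0 ≤ a t) {c : ℤ}
    (hc : ∀ t, a (c - t) = a t) {t : ℤ} (ht : 2 * t ≤ c) : a (t - 1) ≤ a t := by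
  have h := ha t (c - t) (by omega)
  rw [hc, show c - t + 1 = c - (t - 1) by ring, hc] at h
  nlinarith [h0 t, h0 (t - 1)]

theorem IsPF2.le_of_reflect {a : ℤ → ℝ} (ha : IsPF2 a) (h0 : ∀ t, 0 ≤ a t) {c : ℤ}
    (hc : ∀ t, a (c - t) = a t) {s t : ℤ} (hst : s ≤ t) (ht : 2 * t ≤ c) : a s ≤ a t := by
  induction t, hst using Int.leInduction with
  | base => rfl
  | succ t hst ih =>
    calc a s ≤ a t := ih (by omega)
      _ = a (t + 1 - 1) := by rw [add_sub_cancel_right]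
      _ ≤ a (t + 1) := ha.sub_one_le_of_reflect h0 hc ht

theorem rank_sum_log_concave_unimodal_general (n m : ℕ)
    (pmf : ℤ → ℝ)
    (hpmf : ∀ t : ℤ, pmf t =
      ((Finset.univ.filter
          (fun ω : Fin n → Fin m => (∑ i : Fin n, ((ω i : ℕ) + 1 : ℤ)) = t)).card : ℝ) /
        (m ^ n : ℝ)) :
    (∀ t : ℤ, pmf (t - 1) * pmf (t + 1) ≤ pmf t ^ 2) ∧
    (∀ s t : ℤ, s ≤ t → (t : ℝ) ≤ n * (m + 1) / 2 → pmf s ≤ pmf t) ∧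
    (∀ s t : ℤ, s ≤ t → n * ((m : ℝ) + 1) / 2 ≤ (s : ℝ) → pmf t ≤ pmf s) := by
  have hpmf' (t : ℤ) : pmf t = (rankSumCount n m t : ℝ) / m ^ n := hpmf t
  have hpmf_reflect (t : ℤ) : pmf (n * (m + 1) - t) = pmf t := by
    rw [hpmf', hpmf', rankSumCount_reflect]
  have hmono {s t : ℤ} (hst : s ≤ t) (ht : (t : ℝ) ≤ n * (m + 1) / 2) : pmf s ≤ pmf t := by
    rw [hpmf', hpmf']
    refine div_le_div_of_nonneg_right ?_ (by positivity)
    exact (isPF2_rankSumCount n m).le_of_reflect (fun _ => Nat.cast_nonneg _)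
      (fun t => by rw [rankSumCount_reflect]) hst
      (by exact_mod_cast (by linarith : 2 * (t : ℝ) ≤ n * (m + 1)))
  refine ⟨fun t => ?_, fun s t hst ht => hmono hst ht, fun s t hst hs => ?_⟩
  · rw [hpmf', hpmf', hpmf', div_mul_div_comm, div_pow, sq, sq]
    refine div_le_div_of_nonneg_right ?_ (by positivity)
    simpa using isPF2_rankSumCount n m t t le_rfl
  · rw [← hpmf_reflect s, ← hpmf_reflect t]
    exact hmono (by omega) (by push_cast; linarith)

/-- The PMF of the rank sum `S` of `n` i.i.d. uniform variables on `{1,...,m}` is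
log-concave and unimodal: `Pr(S=t)² ≥ Pr(S=t-1)·Pr(S=t+1)` for all `t`, `Pr(S=t)` is
nondecreasing for `t ≤ n(m+1)/2` and nonincreasing for `t ≥ n(m+1)/2`. -/
theorem rank_sum_log_concave_unimodal (n m : ℕ) (hn : 0 < n) (hm : 0 < m)
    (pmf : ℤ → ℝ)
    (hpmf : ∀ t : ℤ, pmf t =
      ((Finset.univ.filter
          (fun ω : Fin n → Fin m => (∑ i : Fin n, ((ω i : ℕ) + 1 : ℤ)) = t)).card : ℝ) /
        (m ^ n : ℝ)) :
    (∀ t : ℤ, pmf (t - 1) * pmf (t + 1) ≤ pmf t ^ 2) ∧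
    (∀ s t : ℤ, s ≤ t → (t : ℝ) ≤ n * (m + 1) / 2 → pmf s ≤ pmf t) ∧
    (∀ s t : ℤ, s ≤ t → n * ((m : ℝ) + 1) / 2 ≤ (s : ℝ) → pmf t ≤ pmf s) :=
  rank_sum_log_concave_unimodal_general n m pmf hpmf
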